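/- Let $n,r,k,t,a$ be positive integers with $k\ge2$, $t+2\le r\le n$ and $t+1\le a\le n$, and define $f(n,r,k,a,t)=(a-t)\binom{n-t-1}{r-t-1}k^{r-t-1}-\binom{a-t}{2}\binom{n-t-2}{r-t-2}k^{r-t-2}$. For $b\in\{t+1,\dots,a\}$ let $\mathcal{N}_b=\{F\in\mathcal{L}_{n,r,k}: M_t\subseteq F,\ |F\cap M_a|=b\}$. Then $f(n,r,k,a,t)=\sum_{i=1}^{a-t}\frac{3i-i^2}{2}\,|\mathcal{N}_{t+i}|$. -/

import Mathlib

open Finset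

attribute [local instance] Classical.propDecidable

/-- The ground set `[n] × [k]`. -/
def box (n k : ℕ) : Finset (ℕ × ℕ) := Finset.Icc 1 n ×ˢ Finset.Icc 1 k

/-- A `k`-signed set on `[n]`: a subset of `[n] × [k]` with pairwise distinct first coordinates. -/
def IsSigned (n k : ℕ) (T : Finset (ℕ × ℕ)) : Prop :=
  T ⊆ box n k ∧ (T.image Prod.fst).card = T.card

/-- `L n r k`: the collection of `k`-signed `r`-sets on `[n]`. -/
def L (n r k : ℕ) : Finset (Finset (ℕ × ℕ)) :=
  (box n k).powerset.filter (fun F => F.card = r ∧ (F.image Prod.fst).card = r)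

/-- A family is `t`-intersecting if any two members meet in at least `t` elements. -/
def IsTIntersecting (t : ℕ) (F : Finset (Finset (ℕ × ℕ))) : Prop :=
  ∀ A ∈ F, ∀ B ∈ F, t ≤ (A ∩ B).card

/-- `T` is a `t`-cover of the family `F`: a `k`-signed set meeting every member in ≥ `t` points. -/
def IsTCover (n k t : ℕ) (F : Finset (Finset (ℕ × ℕ))) (T : Finset (ℕ × ℕ)) : Prop :=
  IsSigned n k T ∧ ∀ A ∈ F, t ≤ (T ∩ A).card

/-- `F` is a maximal `t`-intersecting subfamily of `L n r k`. -/
def IsMaximalTIntersecting (n r k t : ℕ) (F : Finset (Finset (ℕ × ℕ))) : Prop :=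
  F ⊆ L n r k ∧ IsTIntersecting t F ∧
    ∀ G ⊆ L n r k, IsTIntersecting t G → F ⊆ G → G = F

/-- A `t`-intersecting family is trivial if all members contain a fixed `k`-signed `t`-set. -/
def IsTrivial (n k t : ℕ) (F : Finset (Finset (ℕ × ℕ))) : Prop :=
  ∃ T, IsSigned n k T ∧ T.card = t ∧ ∀ A ∈ F, T ⊆ A

/-- `Msig d = {(1,1),(2,1),…,(d,1)}`. -/
def Msig (d : ℕ) : Finset (ℕ × ℕ) := (Finset.Icc 1 d).image (fun x => (x, 1))

/-- The family `H₁(n,r,k,ℓ,t)`. -/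
def H1 (n r k l t : ℕ) : Finset (Finset (ℕ × ℕ)) :=
  (L n r k).filter (fun F =>
    (Msig t ⊆ F ∧ t + 1 ≤ (F ∩ Msig l).card) ∨
    (¬ Msig t ⊆ F ∧ (F ∩ Msig l).card = l - 1))

/-- The family `H₂(n,r,k,c,t)`. -/
def H2 (n r k c t : ℕ) : Finset (Finset (ℕ × ℕ)) :=
  (L n r k).filter (fun F =>
    (Msig t ⊆ F ∧ t + 1 ≤ (F ∩ Msig r).card) ∨
    (F ∩ Msig r = Msig t ∧ Msig c \ Msig r ⊆ F) ∨
    (¬ Msig t ⊆ F ∧ (F ∩ Msig r).card = r - 1 ∧ (F ∩ (Msig c \ Msig r)).card = 1))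

/-- The set of all `t`-covers of `F` of size `t+1`. -/
noncomputable def TauSet (n k t : ℕ) (F : Finset (Finset (ℕ × ℕ))) : Finset (Finset (ℕ × ℕ)) :=
  (box n k).powerset.filter (fun T => IsTCover n k t F T ∧ T.card = t + 1)

/-!
Let `𝒜` be the members of `L n r k` containing `M_t` and `D = M_a \ M_t`. On `𝒜`,
`|F ∩ M_a| = t + |D ∩ F|`, and `(3i - i²)/2 = i - C(i, 2)`, so the right-hand side regroups as
`∑_{F ∈ 𝒜} (|D ∩ F| - C(|D ∩ F|, 2))`. Counting pairs `(F, P)` with `P ⊆ D ∩ F`, `|P| = j` gives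
`∑_{F ∈ 𝒜} C(|D ∩ F|, j) = C(a - t, j) N(t + j)`, where `N(s) = C(n - s, r - s) k^(r - s)` counts
the `k`-signed `r`-sets containing a fixed `k`-signed `s`-set (pick the other `r - s` first
coordinates, then their signs). The cases `j = 1, 2` give the left-hand side.
-/

section SignedSets

variable {α β : Type*} [DecidableEq α]

def signedSetsOn (C : Finset α) (K : Finset β) (m : ℕ) : Finset (Finset (α × β)) :=
  {F ∈ (C ×ˢ K).powerset | #F = m ∧ #(F.image Prod.fst) = m}

lemma mem_signedSetsOn {C : Finset α} {K : Finset β} {m : ℕ} {F : Finset (α × β)} :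
    F ∈ signedSetsOn C K m ↔ F ⊆ C ×ˢ K ∧ #F = m ∧ #(F.image Prod.fst) = m := by
  rw [signedSetsOn, mem_filter, mem_powerset]

lemma card_filter_image_fst_signedSetsOn {C A : Finset α} (K : Finset β) {m : ℕ}
    (hA : A ∈ C.powersetCard m) :
    #{F ∈ signedSetsOn C K m | F.image Prod.fst = A} = #K ^ m := by
  obtain ⟨hAC, rfl⟩ := mem_powersetCard.mp hA
  let graph (g : ∀ a ∈ A, β) : Finset (α × β) := A.attach.image fun x => (x.1, g x.1 x.2)
  have image_fst_graph (g) : (graph g).image Prod.fst = A := by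
    simp only [graph, image_image]
    exact attach_image_val
  have card_graph (g) : #(graph g) = #A :=
    (card_image_of_injective _ fun x y h => Subtype.ext (congrArg Prod.fst h)).trans card_attach
  have graph_injective : Function.Injective graph := by
    intro g g' h
    funext x hx
    obtain ⟨y, -, hy⟩ := mem_image.mp (h ▸ mem_image_of_mem _ (mem_attach A ⟨x, hx⟩) :
      (x, g x hx) ∈ graph g')
    obtain ⟨rfl, h2⟩ := Prod.ext_iff.mp hy
    exact h2.symm
  -- a signed set whose first coordinates are exactly `A` is the graph of a function `A → K`
  suffices {F ∈ signedSetsOn C K #A | F.image Prod.fst = A} = (A.pi fun _ => K).image graph by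
    rw [this, card_image_of_injective _ graph_injective, card_pi, prod_const]
  ext F
  simp only [mem_filter, mem_signedSetsOn, mem_image, mem_pi]
  constructor
  · rintro ⟨⟨hFCK, hF, -⟩, hFA⟩
    have hfib (x) (hx : x ∈ A) : ∃ b, (x, b) ∈ F := by
      obtain ⟨p, hp, rfl⟩ := mem_image.mp (hFA ▸ hx)
      exact ⟨p.2, hp⟩
    choose g hg using hfib
    refine ⟨g, fun x hx => (mem_product.mp (hFCK (hg x hx))).2, ?_⟩
    refine eq_of_subset_of_card_le ?_ (by rw [hF, card_graph])
    intro p hp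
    obtain ⟨⟨x, hx⟩, -, rfl⟩ := mem_image.mp hp
    exact hg x hx
  · rintro ⟨g, hgK, rfl⟩
    refine ⟨⟨?_, card_graph g, by rw [image_fst_graph]⟩, image_fst_graph g⟩
    intro p hp
    obtain ⟨⟨x, hx⟩, -, rfl⟩ := mem_image.mp hp
    exact mem_product.mpr ⟨hAC hx, hgK x hx⟩

lemma card_signedSetsOn (C : Finset α) (K : Finset β) (m : ℕ) :
    #(signedSetsOn C K m) = (#C).choose m * #K ^ m := by
  have hmaps : ∀ F ∈ signedSetsOn C K m, F.image Prod.fst ∈ C.powersetCard m := by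
    intro F hF
    obtain ⟨hFCK, -, hFm⟩ := mem_signedSetsOn.mp hF
    refine mem_powersetCard.mpr ⟨?_, hFm⟩
    intro x hx
    obtain ⟨p, hp, rfl⟩ := mem_image.mp hx
    exact (mem_product.mp (hFCK hp)).1
  rw [card_eq_sum_card_fiberwise hmaps, sum_congr rfl fun A hA =>
    card_filter_image_fst_signedSetsOn K hA, sum_const, card_powersetCard, smul_eq_mul]

lemma card_filter_superset_signedSetsOn [DecidableEq β] {C : Finset α} {K : Finset β}
    {S : Finset (α × β)} {s m : ℕ} (hS : S ∈ signedSetsOn C K s) (hsm : s ≤ m) :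
    #{F ∈ signedSetsOn C K m | S ⊆ F} = #(signedSetsOn (C \ S.image Prod.fst) K (m - s)) := by
  obtain ⟨hSCK, hSs, hSfst⟩ := mem_signedSetsOn.mp hS
  refine card_nbij' (· \ S) (· ∪ S) ?_ ?_ ?_ ?_
  · intro F hF
    obtain ⟨hF, hSF⟩ := mem_filter.mp hF
    obtain ⟨hFCK, hFm, hFfst⟩ := mem_signedSetsOn.mp hF
    have hinj : Set.InjOn Prod.fst (F : Set (α × β)) := card_image_iff.mp (hFfst.trans hFm.symm)
    refine mem_signedSetsOn.mpr ⟨fun p hp => ?_, ?_, ?_⟩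
    · obtain ⟨hpF, hpS⟩ := mem_sdiff.mp hp
      obtain ⟨hpC, hpK⟩ := mem_product.mp (hFCK hpF)
      refine mem_product.mpr ⟨mem_sdiff.mpr ⟨hpC, fun hpfst => ?_⟩, hpK⟩
      obtain ⟨q, hq, hqp⟩ := mem_image.mp hpfst
      exact hpS (hinj (hSF hq) hpF hqp ▸ hq)
    · rw [card_sdiff_of_subset hSF, hFm, hSs]
    · rw [card_image_of_injOn (hinj.mono (coe_subset.mpr sdiff_subset)),
        card_sdiff_of_subset hSF, hFm, hSs]
  · intro G hG
    obtain ⟨hGCK, hGm, hGfst⟩ := mem_signedSetsOn.mp hG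
    have hfst (p) (hp : p ∈ G) : p.1 ∉ S.image Prod.fst :=
      (mem_sdiff.mp (mem_product.mp (hGCK hp)).1).2
    have hdisj : Disjoint G S :=
      disjoint_left.mpr fun p hpG hpS => hfst p hpG (mem_image_of_mem _ hpS)
    have hdisj_fst : Disjoint (G.image Prod.fst) (S.image Prod.fst) := by
      refine disjoint_left.mpr fun x hxG => ?_
      obtain ⟨p, hp, rfl⟩ := mem_image.mp hxG
      exact hfst p hp
    refine mem_filter.mpr ⟨mem_signedSetsOn.mpr ⟨union_subset (fun p hp => ?_) hSCK, ?_, ?_⟩,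
      subset_union_right⟩
    · obtain ⟨hpC, hpK⟩ := mem_product.mp (hGCK hp)
      exact mem_product.mpr ⟨(mem_sdiff.mp hpC).1, hpK⟩
    · rw [card_union_of_disjoint hdisj, hGm, hSs, Nat.sub_add_cancel hsm]
    · rw [image_union, card_union_of_disjoint hdisj_fst, hGfst, hSfst, Nat.sub_add_cancel hsm]
  · intro F hF
    exact sdiff_union_of_subset (mem_filter.mp hF).2
  · intro G hG
    refine union_sdiff_cancel_right (disjoint_left.mpr fun p hpG hpS => ?_)
    obtain ⟨hpC, -⟩ := mem_product.mp ((mem_signedSetsOn.mp hG).1 hpG)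
    exact (mem_sdiff.mp hpC).2 (mem_image_of_mem _ hpS)

end SignedSets

lemma card_filter_superset_L {n r k : ℕ} {S : Finset (ℕ × ℕ)} (hS : IsSigned n k S)
    (hSr : #S ≤ r) : #{F ∈ L n r k | S ⊆ F} = (n - #S).choose (r - #S) * k ^ (r - #S) := by
  have hS' : S ∈ signedSetsOn (Icc 1 n) (Icc 1 k) #S := mem_signedSetsOn.mpr ⟨hS.1, rfl, hS.2⟩
  have hfst : S.image Prod.fst ⊆ Icc 1 n := by
    intro x hx
    obtain ⟨p, hp, rfl⟩ := mem_image.mp hx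
    exact (mem_product.mp (hS.1 hp)).1
  rw [show L n r k = signedSetsOn (Icc 1 n) (Icc 1 k) r from rfl,
    card_filter_superset_signedSetsOn hS' hSr, card_signedSetsOn, card_sdiff_of_subset hfst, hS.2,
    Nat.card_Icc, Nat.card_Icc, Nat.add_sub_cancel, Nat.add_sub_cancel]

lemma sum_choose_card_inter {α : Type*} [DecidableEq α] {s : Finset α} {B : Finset (Finset α)}
    {j c : ℕ} (h : ∀ P ∈ s.powersetCard j, #{b ∈ B | P ⊆ b} = c) :
    ∑ t ∈ B, (#(s ∩ t)).choose j = (#s).choose j * c := by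
  have hchoose (t : Finset α) : (#(s ∩ t)).choose j = #{P ∈ s.powersetCard j | P ⊆ t} := by
    rw [← card_powersetCard]
    congr 1
    ext P
    simp only [mem_powersetCard, mem_filter, subset_inter_iff]
    tauto
  calc ∑ t ∈ B, (#(s ∩ t)).choose j
      = ∑ P ∈ s.powersetCard j, #{b ∈ B | P ⊆ b} := by
        simp_rw [hchoose, card_filter]
        exact sum_comm
    _ = (#s).choose j * c := by rw [sum_const_nat h, card_powersetCard]

lemma sum_comp_eq_sum_Icc_mul_card_filter {ι R : Type*} [NonAssocSemiring R] {s : Finset ι}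
    {f : ι → ℕ} {m : ℕ} (hf : ∀ x ∈ s, f x ≤ m) {g : ℕ → R} (hg : g 0 = 0) :
    ∑ x ∈ s, g (f x) = ∑ i ∈ Icc 1 m, g i * #{x ∈ s | f x = i} := by
  have hmaps : ∀ x ∈ s, f x ∈ insert 0 (Icc 1 m) := by
    intro x hx
    have := hf x hx
    simp only [mem_insert, mem_Icc]
    omega
  rw [← sum_fiberwise_of_maps_to' hmaps, sum_insert (by simp), sum_const, hg, smul_zero, zero_add]
  exact sum_congr rfl fun i _ => by rw [sum_const, nsmul_eq_mul']

lemma mem_Msig {d : ℕ} {p : ℕ × ℕ} : p ∈ Msig d ↔ p.1 ∈ Icc 1 d ∧ p.2 = 1 := by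
  constructor
  · intro hp
    obtain ⟨x, hx, rfl⟩ := mem_image.mp hp
    exact ⟨hx, rfl⟩
  · rintro ⟨h1, h2⟩
    exact mem_image.mpr ⟨p.1, h1, by rw [← h2]⟩

lemma injOn_fst_Msig (d : ℕ) : Set.InjOn Prod.fst (Msig d : Set (ℕ × ℕ)) :=
  fun _ hp _ hq h => Prod.ext h ((mem_Msig.mp hp).2.trans (mem_Msig.mp hq).2.symm)

lemma card_Msig (d : ℕ) : #(Msig d) = d := by
  rw [Msig, card_image_of_injective _ fun x y h => (Prod.ext_iff.mp h).1, Nat.card_Icc,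
    Nat.add_sub_cancel]

lemma Msig_subset_Msig {t a : ℕ} (h : t ≤ a) : Msig t ⊆ Msig a :=
  image_subset_image (Icc_subset_Icc_right h)

lemma card_sdiff_Msig {t a : ℕ} (h : t ≤ a) : #(Msig a \ Msig t) = a - t := by
  rw [card_sdiff_of_subset (Msig_subset_Msig h), card_Msig, card_Msig]

lemma isSigned_of_subset_Msig {n k a : ℕ} {T : Finset (ℕ × ℕ)} (hT : T ⊆ Msig a) (han : a ≤ n)
    (hk : 1 ≤ k) : IsSigned n k T := by
  refine ⟨fun p hp => ?_, card_image_of_injOn ((injOn_fst_Msig a).mono (coe_subset.mpr hT))⟩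
  obtain ⟨h1, h2⟩ := mem_Msig.mp (hT hp)
  obtain ⟨h1, h1'⟩ := mem_Icc.mp h1
  exact mem_product.mpr ⟨mem_Icc.mpr ⟨h1, h1'.trans han⟩, mem_Icc.mpr ⟨h2.ge, h2 ▸ hk⟩⟩

lemma card_inter_Msig {t a : ℕ} {F : Finset (ℕ × ℕ)} (hF : Msig t ⊆ F) (h : t ≤ a) :
    #(F ∩ Msig a) = t + #((Msig a \ Msig t) ∩ F) := by
  have hsplit : F ∩ Msig a = Msig t ∪ (Msig a \ Msig t) ∩ F := by
    rw [inter_comm, sdiff_inter_right_comm, union_sdiff_of_subset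
      (subset_inter (Msig_subset_Msig h) hF)]
  rw [hsplit, card_union_of_disjoint (disjoint_sdiff.mono_right inter_subset_left), card_Msig]

lemma sum_choose_card_inter_sdiff_Msig {n r k t a j : ℕ} (hk : 1 ≤ k) (htj : t + j ≤ r)
    (hta : t ≤ a) (han : a ≤ n) :
    ∑ F ∈ L n r k with Msig t ⊆ F, (#((Msig a \ Msig t) ∩ F)).choose j =
      (a - t).choose j * ((n - t - j).choose (r - t - j) * k ^ (r - t - j)) := by
  rw [← card_sdiff_Msig hta]
  refine sum_choose_card_inter fun P hP => ?_
  obtain ⟨hPD, hPj⟩ := mem_powersetCard.mp hP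
  have hdisj : Disjoint (Msig t) P := disjoint_sdiff.mono_right hPD
  have hunion : Msig t ∪ P ⊆ Msig a := union_subset (Msig_subset_Msig hta) (hPD.trans sdiff_subset)
  have hcard : #(Msig t ∪ P) = t + j := by rw [card_union_of_disjoint hdisj, card_Msig, hPj]
  rw [filter_filter, Nat.sub_sub, Nat.sub_sub, ← hcard,
    ← card_filter_superset_L (isSigned_of_subset_Msig hunion han hk) (hcard ▸ htj)]
  simp_rw [union_subset_iff]

theorem f_as_weighted_sum_general (n r k t a : ℕ)
    (hk : 2 ≤ k) (htr : t + 2 ≤ r) (hta : t + 1 ≤ a) (han : a ≤ n) :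
    ((a - t : ℕ) : ℚ) * (n - t - 1).choose (r - t - 1) * (k : ℚ) ^ (r - t - 1) -
        ((a - t : ℕ).choose 2 : ℚ) * (n - t - 2).choose (r - t - 2) * (k : ℚ) ^ (r - t - 2) =
      ∑ i ∈ Finset.Icc 1 (a - t),
        ((3 * (i : ℚ) - (i : ℚ) ^ 2) / 2) *
          ((L n r k).filter (fun F => Msig t ⊆ F ∧ (F ∩ Msig a).card = t + i)).card := by
  set D := Msig a \ Msig t
  set 𝒜 := {F ∈ L n r k | Msig t ⊆ F}
  have hsum₁ := sum_choose_card_inter_sdiff_Msig (r := r) (k := k) (t := t) (j := 1)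
    (by omega) (by omega) (by omega) han
  have hsum₂ := sum_choose_card_inter_sdiff_Msig (k := k) (j := 2) (by omega) htr (by omega) han
  simp only [Nat.choose_one_right] at hsum₁
  have hfiber (i : ℕ) : {F ∈ L n r k | Msig t ⊆ F ∧ #(F ∩ Msig a) = t + i} =
      {F ∈ 𝒜 | #(D ∩ F) = i} := by
    rw [filter_filter]
    refine filter_congr fun F _ => and_congr_right fun hF => ?_
    rw [card_inter_Msig hF (by omega), Nat.add_left_cancel_iff]
  have hle : ∀ F ∈ 𝒜, #(D ∩ F) ≤ a - t := fun F _ =>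
    (card_sdiff_Msig (a := a) (t := t) (by omega)) ▸ card_le_card inter_subset_left
  calc _ = ∑ F ∈ 𝒜, ((#(D ∩ F) : ℚ) - ((#(D ∩ F)).choose 2 : ℕ)) := by
        rw [sum_sub_distrib, ← Nat.cast_sum, ← Nat.cast_sum, hsum₁, hsum₂]
        push_cast
        ring
    _ = ∑ i ∈ Icc 1 (a - t), ((i : ℚ) - (i.choose 2 : ℕ)) * #{F ∈ 𝒜 | #(D ∩ F) = i} :=
        sum_comp_eq_sum_Icc_mul_card_filter (g := fun i : ℕ => (i : ℚ) - (i.choose 2 : ℕ)) hle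
          (by simp)
    _ = _ := by
        refine sum_congr rfl fun i _ => ?_
        rw [hfiber, Nat.cast_choose_two]
        ring

theorem f_as_weighted_sum (n r k t a : ℕ) (hn : 0 < n) (ht : 0 < t)
    (hk : 2 ≤ k) (htr : t + 2 ≤ r) (hrn : r ≤ n) (hta : t + 1 ≤ a) (han : a ≤ n) :
    ((a - t : ℕ) : ℚ) * (n - t - 1).choose (r - t - 1) * (k : ℚ) ^ (r - t - 1) -
        ((a - t : ℕ).choose 2 : ℚ) * (n - t - 2).choose (r - t - 2) * (k : ℚ) ^ (r - t - 2) =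
      ∑ i ∈ Finset.Icc 1 (a - t),
        ((3 * (i : ℚ) - (i : ℚ) ^ 2) / 2) *
          ((L n r k).filter (fun F => Msig t ⊆ F ∧ (F ∩ Msig a).card = t + i)).card :=
  f_as_weighted_sum_general n r k t a hk htr hta han
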